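/- arXiv:0708.0114 — 2 statements merged into one kernel-verified Lean document; each statement's English description precedes it below -/
import Mathlib

section
/- Let F be an ordered field and v_0, ..., v_n, w ∈ F^n in general position. Then ∑_{i=0}^{n} (-1)^i c(v_0, ..., v̂_i, ..., v_n)(w) = d(v_0, ..., v_n), where c(u_1,...,u_n)(w) = sign det(u_1,...,u_n) if all dual-basis coordinates of w with respect to the basis u_1,...,u_n are positive, and 0 otherwise. -/
open Matrix
open scoped BigOperators

/-- A family of vectors in `F^n` is *in general position* if every subset with
at most `n` elements is linearly independent. -/
def GenPos {F : Type*} [Field F] {n m : ℕ} (v : Fin m → (Fin n → F)) : Prop :=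
  ∀ s : Finset (Fin m), s.card ≤ n → LinearIndependent F (fun i : s => v i.1)

/-- The sign of an element of an ordered field. -/
def sgn {F : Type*} [Field F] [LinearOrder F] [IsStrictOrderedRing F] (x : F) : ℤ :=
  if 0 < x then 1 else if x < 0 then -1 else 0

open Classical in
/-- The function `d` of the Shintani cocycle construction: for `v_0, ..., v_n` in
general position in `F^n`, it equals `(-1)^i sgn det(v_0,...,v̂_i,...,v_n)` (computed
here with `i = 0`) if the coefficients of the linear relation among the `v_j` all have
the same sign, and `0` otherwise. -/
noncomputable def dFun {F : Type*} [Field F] [LinearOrder F] [IsStrictOrderedRing F] {n : ℕ}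
    (v : Fin (n + 1) → (Fin n → F)) : ℤ :=
  if ∃ lam : Fin (n + 1) → F, (∀ i, lam i ≠ 0) ∧ (∑ i, lam i • v i) = 0 ∧
      ((∀ i, 0 < lam i) ∨ (∀ i, lam i < 0))
  then sgn (Matrix.of (fun r (j : Fin n) => v j.succ r)).det
  else 0

open Classical in
/-- The signed characteristic function of the open cone spanned by the basis
`v_1, ..., v_n`:  `c(v_1,...,v_n)(w) = sgn det(v_1,...,v_n)` if all coordinates of `w`
with respect to the basis (i.e. the values of the dual basis at `w`) are positive,
and `0` otherwise. -/
noncomputable def cFun {F : Type*} [Field F] [LinearOrder F] [IsStrictOrderedRing F] {n : ℕ}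
    (v : Fin n → (Fin n → F)) (w : Fin n → F) : ℤ :=
  let M : Matrix (Fin n) (Fin n) F := Matrix.of fun r j => v j r
  if ∀ i, 0 < (M⁻¹ *ᵥ w) i then sgn M.det else 0

/-!
Write `v₀ = ∑ xⱼ vⱼ` and `w = ∑ aⱼ xⱼ vⱼ` in the basis `v₁, …, vₙ`; general position makes all
`xⱼ` and `aⱼ` nonzero and the `aⱼ` pairwise distinct. Replacing `vᵢ` by `v₀` multiplies the
determinant by `± xᵢ`, and the new coordinates of `w` are `aᵢ` and `(aⱼ - aᵢ) xⱼ`: the point at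
`t = aᵢ` of the line `t ↦ ((aⱼ - t) xⱼ)ⱼ`, where it crosses the hyperplane `zᵢ = 0`. After factoring
out `sgn det(v₁, …, vₙ)`, the identity counts the crossings of the ray `t ≥ 0` with the facets of
the open positive orthant. The ray starts inside (`c(v₁, …, vₙ)(w) ≠ 0`) or enters through a facet
with `xᵢ < 0` iff it ends inside (`d ≠ 0`, all `xⱼ < 0`) or leaves through a facet with `xᵢ > 0`:
both say that the ray meets the orthant. Each sign of `xᵢ` accounts for at most one crossing.
-/

section LinearAlgebra

variable {F : Type*} [Field F] {n : ℕ}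

open Classical in
theorem GenPos.eq_zero_of_sum_smul_eq_zero {m : ℕ} {u : Fin m → Fin n → F} (h : GenPos u)
    {c : Fin m → F} (hc : (Finset.univ.filter (c · ≠ 0)).card ≤ n)
    (hsum : ∑ k, c k • u k = 0) : c = 0 := by
  have hli := linearIndepOn_finset_iff.mp (h _ hc) c
  funext k
  by_contra hk
  refine hk (hli ?_ k (by simpa using hk))
  rw [← hsum, Finset.sum_filter_of_ne fun k _ hk => by simpa using left_ne_zero_of_smul hk]

open Classical in
theorem GenPos.eq_zero_of_two_zeros {u : Fin (n + 2) → Fin n → F} (h : GenPos u)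
    {c : Fin (n + 2) → F} {p q : Fin (n + 2)} (hpq : p ≠ q) (hp : c p = 0) (hq : c q = 0)
    (hsum : ∑ k, c k • u k = 0) : c = 0 := by
  refine h.eq_zero_of_sum_smul_eq_zero ?_ hsum
  have hsub : Finset.univ.filter (c · ≠ 0) ⊆ Finset.univ \ {p, q} := fun k hk => by
    simp only [Finset.mem_filter] at hk
    simp only [Finset.mem_sdiff, Finset.mem_univ, Finset.mem_insert, Finset.mem_singleton,
      true_and]
    rintro (rfl | rfl) <;> simp_all
  simpa [Finset.card_sdiff_of_subset, Finset.card_pair hpq] using Finset.card_le_card hsub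

variable {v : Fin (n + 1) → Fin n → F} {w : Fin n → F}

theorem sum_snoc_cons_smul_snoc (α β : F) (g : Fin n → F) :
    ∑ k, (Fin.snoc (Fin.cons α g) β : Fin (n + 2) → F) k • (Fin.snoc v w : Fin (n + 2) → _) k
      = α • v 0 + ∑ j, g j • v j.succ + β • w := by
  rw [Fin.sum_univ_castSucc]
  simp only [Fin.snoc_castSucc, Fin.snoc_last, Fin.sum_univ_succ, Fin.cons_zero, Fin.cons_succ,
    add_assoc]

theorem GenPos.snoc_cons_eq_zero (hgp : GenPos (Fin.snoc v w : Fin (n + 2) → Fin n → F))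
    {α β : F} {g : Fin n → F} (hrel : α • v 0 + ∑ j, g j • v j.succ + β • w = 0)
    {p q : Fin (n + 2)} (hpq : p ≠ q) (hp : (Fin.snoc (Fin.cons α g) β : Fin (n + 2) → F) p = 0)
    (hq : (Fin.snoc (Fin.cons α g) β : Fin (n + 2) → F) q = 0) :
    (Fin.snoc (Fin.cons α g) β : Fin (n + 2) → F) = 0 :=
  hgp.eq_zero_of_two_zeros hpq hp hq ((sum_snoc_cons_smul_snoc α β g).trans hrel)

theorem GenPos.linearIndependent_succ (hgp : GenPos (Fin.snoc v w : Fin (n + 2) → Fin n → F)) :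
    LinearIndependent F fun j : Fin n => v j.succ := by
  rw [Fintype.linearIndependent_iff]
  intro g hg j
  have h := hgp.snoc_cons_eq_zero (α := 0) (β := 0) (by simpa using hg)
    (p := Fin.castSucc 0) (q := Fin.last _) (Fin.castSucc_lt_last _).ne (by simp) (by simp)
  simpa only [Fin.snoc_castSucc, Fin.cons_succ, Pi.zero_apply] using
    congrFun h (Fin.castSucc j.succ)

theorem GenPos.coord_head_ne_zero (hgp : GenPos (Fin.snoc v w : Fin (n + 2) → Fin n → F))
    {x : Fin n → F} (hx : ∑ j : Fin n, x j • v j.succ = v 0) (j : Fin n) : x j ≠ 0 := fun hxj => by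
  have h := hgp.snoc_cons_eq_zero (α := 1) (g := -x) (β := 0) (by simp [hx])
    (p := Fin.castSucc j.succ) (q := Fin.last _) (Fin.castSucc_lt_last _).ne
    (by simp only [Fin.snoc_castSucc, Fin.cons_succ, Pi.neg_apply, hxj, neg_zero])
    (by simp)
  simpa using congrFun h (Fin.castSucc 0)

theorem GenPos.coord_last_ne_zero (hgp : GenPos (Fin.snoc v w : Fin (n + 2) → Fin n → F))
    {y : Fin n → F} (hy : ∑ j : Fin n, y j • v j.succ = w) (j : Fin n) : y j ≠ 0 := fun hyj => by
  have h := hgp.snoc_cons_eq_zero (α := 0) (g := y) (β := -1) (by simp [hy])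
    (p := Fin.castSucc 0) (q := Fin.castSucc j.succ)
    (by simp only [ne_eq, Fin.castSucc_inj]; exact (Fin.succ_ne_zero j).symm)
    (by simp) (by simp only [Fin.snoc_castSucc, Fin.cons_succ, hyj])
  simpa using congrFun h (Fin.last _)

theorem GenPos.injective_div (hgp : GenPos (Fin.snoc v w : Fin (n + 2) → Fin n → F))
    {x y : Fin n → F} (hx : ∑ j : Fin n, x j • v j.succ = v 0)
    (hy : ∑ j : Fin n, y j • v j.succ = w) : Function.Injective fun j => y j / x j := by
  intro i j hij
  by_contra hne
  have hcross : y i * x j = y j * x i :=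
    (div_eq_div_iff (hgp.coord_head_ne_zero hx i) (hgp.coord_head_ne_zero hx j)).mp hij
  have h := hgp.snoc_cons_eq_zero (α := y i) (g := fun k => x i * y k - y i * x k) (β := -x i)
    (by simp only [sub_smul, mul_smul, Finset.sum_sub_distrib, ← Finset.smul_sum, neg_smul,
          hx, hy]; abel)
    (p := Fin.castSucc i.succ) (q := Fin.castSucc j.succ)
    (by simpa only [ne_eq, Fin.castSucc_inj, Fin.succ_inj] using hne)
    (by simp only [Fin.snoc_castSucc, Fin.cons_succ]; ring)
    (by simp only [Fin.snoc_castSucc, Fin.cons_succ]; linear_combination -hcross)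
  exact hgp.coord_last_ne_zero hy i (by simpa using congrFun h (Fin.castSucc 0))

theorem LinearIndependent.exists_sum_smul_eq {b : Fin n → Fin n → F}
    (hb : LinearIndependent F b) (u : Fin n → F) : ∃ x : Fin n → F, ∑ j, x j • b j = u := by
  let basis := basisOfLinearIndependentOfCardEqFinrank' b hb (by simp)
  exact ⟨basis.repr u, by simpa [basis] using basis.sum_repr u⟩

theorem of_mulVec_eq_sum (u : Fin n → Fin n → F) (z : Fin n → F) :
    (Matrix.of fun r j => u j r) *ᵥ z = ∑ j, z j • u j := by
  ext r
  simp [Matrix.mulVec, dotProduct, Finset.sum_apply, mul_comm]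

theorem det_succAbove_succ {v : Fin (n + 2) → Fin (n + 1) → F} {x : Fin (n + 1) → F}
    (hx : ∑ j, x j • v j.succ = v 0) (i : Fin (n + 1)) :
    (Matrix.of fun r k => v (i.succ.succAbove k) r).det
      = (-1) ^ (i : ℕ) * (x i * (Matrix.of fun r (j : Fin (n + 1)) => v j.succ r).det) := by
  set B := Matrix.of fun r (j : Fin (n + 1)) => v j.succ r
  have hcols : (Matrix.of fun r k => v (i.succ.succAbove k) r)
      = (B.updateCol i fun r => ∑ j, x j • B r j).submatrix id i.cycleRange.symm := by
    ext r k
    refine Fin.cases ?_ (fun l => ?_) k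
    · simp [B, ← hx, Finset.sum_apply]
    · simp [B, Fin.succAbove_ne]
  rw [hcols, Matrix.det_permute', Matrix.det_updateCol_sum, Equiv.Perm.sign_symm,
    Fin.sign_cycleRange]
  push_cast
  ring

theorem sum_cons_smul_succAbove_succ {v : Fin (n + 2) → Fin (n + 1) → F}
    {x : Fin (n + 1) → F} (hx : ∑ j, x j • v j.succ = v 0) (a : Fin (n + 1) → F)
    (i : Fin (n + 1)) :
    ∑ k, (Fin.cons (a i) fun l => (a (i.succAbove l) - a i) * x (i.succAbove l) :
        Fin (n + 1) → F) k • v (i.succ.succAbove k)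
      = ∑ j, (a j * x j) • v j.succ := by
  rw [Fin.sum_univ_succ]
  simp only [Fin.cons_zero, Fin.cons_succ, Fin.succ_succAbove_zero, Fin.succ_succAbove_succ]
  rw [← hx, Fin.sum_univ_succAbove _ i, Fin.sum_univ_succAbove _ i, smul_add, Finset.smul_sum]
  rw [add_assoc, ← Finset.sum_add_distrib]
  congr 1
  · module
  · refine Finset.sum_congr rfl fun l _ => ?_
    module

end LinearAlgebra

section Ordered

variable {F : Type*} [Field F] [LinearOrder F]

/-- The ray `t ↦ ((a r - t) * x r)_r`, `t > 0`, crosses the facet `z i = 0` of the positive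
orthant in its relative interior (at `t = a i`). -/
def IsFacetCrossing {ι : Type*} (x a : ι → F) (i : ι) : Prop :=
  0 < a i ∧ ∀ r, r ≠ i → 0 < (a r - a i) * x r

theorem forall_cons_pos_iff_isFacetCrossing {n : ℕ} {x a : Fin (n + 1) → F} (i : Fin (n + 1)) :
    (∀ k, 0 < (Fin.cons (a i) fun l => (a (i.succAbove l) - a i) * x (i.succAbove l) :
        Fin (n + 1) → F) k) ↔ IsFacetCrossing x a i := by
  rw [Fin.forall_fin_succ, IsFacetCrossing]
  simp only [Fin.cons_zero, Fin.cons_succ]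
  refine and_congr_right' ⟨fun h r hr => ?_, fun h l => h _ (Fin.succAbove_ne i l)⟩
  obtain ⟨l, rfl⟩ := Fin.exists_succAbove_eq hr
  exact h l

variable [IsStrictOrderedRing F]

theorem sgn_eq_sign (x : F) : sgn x = (SignType.sign x : ℤ) := by
  rcases lt_trichotomy x 0 with h | rfl | h
  · simp [sgn, h, h.not_gt]
  · simp [sgn]
  · simp [sgn, h]

theorem sgn_mul (x y : F) : sgn (x * y) = sgn x * sgn y := by
  simp [sgn_eq_sign, sign_mul]

theorem sgn_neg_one_pow (k : ℕ) : sgn ((-1 : F) ^ k) = (-1) ^ k := by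
  simp [sgn_eq_sign, sign_pow]

section Crossings

variable {ι : Type*} {x a : ι → F}

theorem IsFacetCrossing.mul_neg {i j : ι} (hi : IsFacetCrossing x a i)
    (hj : IsFacetCrossing x a j) (hij : i ≠ j) : x i * x j < 0 := by
  nlinarith [mul_pos (hi.2 j hij.symm) (hj.2 i hij), sq_nonneg (a i - a j)]

variable [Fintype ι]

theorem sum_ite_eq_ite_exists (p : ι → Prop) [DecidablePred p] (hp : ∀ i j, p i → p j → i = j) :
    (∑ i, if p i then (1 : ℤ) else 0) = if ∃ i, p i then 1 else 0 := by
  split_ifs with h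
  · obtain ⟨i, hi⟩ := h
    rw [Finset.sum_eq_single i (fun j _ hj => if_neg fun hpj => hj (hp j i hpj hi))
      (fun h => absurd (Finset.mem_univ i) h), if_pos hi]
  · exact Finset.sum_eq_zero fun i _ => if_neg fun hi => h ⟨i, hi⟩

open Classical in
theorem sum_sgn_mul_ite_isFacetCrossing :
    (∑ i, sgn (x i) * if IsFacetCrossing x a i then 1 else 0)
      = (if ∃ i, 0 < x i ∧ IsFacetCrossing x a i then 1 else 0)
        - if ∃ i, x i < 0 ∧ IsFacetCrossing x a i then 1 else 0 := by
  have same_sign_unique : ∀ i j, IsFacetCrossing x a i → IsFacetCrossing x a j →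
      0 < x i * x j → i = j := fun i j hi hj hpos =>
    by_contra fun hij => (hi.mul_neg hj hij).not_gt hpos
  rw [← sum_ite_eq_ite_exists (fun i => 0 < x i ∧ IsFacetCrossing x a i) fun i j hi hj =>
      same_sign_unique i j hi.2 hj.2 (mul_pos hi.1 hj.1),
    ← sum_ite_eq_ite_exists (fun i => x i < 0 ∧ IsFacetCrossing x a i) fun i j hi hj =>
      same_sign_unique i j hi.2 hj.2 (mul_pos_of_neg_of_neg hi.1 hj.1),
    ← Finset.sum_sub_distrib]
  refine Finset.sum_congr rfl fun i _ => ?_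
  rcases lt_trichotomy (x i) 0 with h | h | h <;> split_ifs <;> simp_all [sgn, h.not_gt]

theorem forall_pos_or_exists_entry_iff (hx : ∀ i, x i ≠ 0) (ha : ∀ i, a i ≠ 0)
    (hinj : Function.Injective a) :
    ((∀ r, 0 < a r * x r) ∨ ∃ j, x j < 0 ∧ IsFacetCrossing x a j) ↔
      (∀ s, 0 < x s → 0 < a s) ∧ ∀ r s, x r < 0 → 0 < x s → a r < a s := by
  constructor
  · rintro (hY | ⟨j, hj, hja, hjr⟩)
    · have hpos : ∀ s, 0 < x s → 0 < a s := fun s hs => pos_of_mul_pos_left (hY s) hs.le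
      exact ⟨hpos, fun r s hr hs => (neg_of_mul_pos_left (hY r) hr.le).trans (hpos s hs)⟩
    · have below : ∀ s, 0 < x s → a j < a s := fun s hs =>
        sub_pos.mp (pos_of_mul_pos_left (hjr s (by rintro rfl; linarith)) hs.le)
      refine ⟨fun s hs => hja.trans (below s hs), fun r s hr hs => ?_⟩
      have : a r ≤ a j := by
        rcases eq_or_ne r j with rfl | hrj
        · rfl
        · exact (sub_neg.mp (neg_of_mul_pos_left (hjr r hrj) hr.le)).le
      exact this.trans_lt (below s hs)
  · rintro ⟨hpos, hsep⟩
    by_cases h : ∃ r, x r < 0 ∧ 0 < a r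
    · obtain ⟨r₀, hr₀, har₀⟩ := h
      obtain ⟨j, hj, hjmax⟩ := Finset.exists_max_image (Finset.univ.filter (x · < 0)) a
        ⟨r₀, by simpa using hr₀⟩
      simp only [Finset.mem_filter, Finset.mem_univ, true_and] at hj hjmax
      refine Or.inr ⟨j, hj, har₀.trans_le (hjmax r₀ hr₀), fun r hrj => ?_⟩
      rcases (hx r).lt_or_gt with hr | hr
      · exact mul_pos_of_neg_of_neg (sub_neg.mpr ((hjmax r hr).lt_of_ne (hinj.ne hrj))) hr
      · exact mul_pos (sub_pos.mpr (hsep j r hj hr)) hr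
    · push Not at h
      refine Or.inl fun r => ?_
      rcases (hx r).lt_or_gt with hr | hr
      · exact mul_pos_of_neg_of_neg ((h r hr).lt_of_ne (ha r)) hr
      · exact mul_pos (hpos r hr) hr

theorem forall_neg_or_exists_exit_iff (hx : ∀ i, x i ≠ 0) (hinj : Function.Injective a) :
    ((∀ r, x r < 0) ∨ ∃ i, 0 < x i ∧ IsFacetCrossing x a i) ↔
      (∀ s, 0 < x s → 0 < a s) ∧ ∀ r s, x r < 0 → 0 < x s → a r < a s := by
  constructor
  · rintro (hX | ⟨i, hi, hia, hir⟩)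
    · exact ⟨fun s hs => absurd hs (hX s).not_gt, fun r s _ hs => absurd hs (hX s).not_gt⟩
    · have above : ∀ s, 0 < x s → a i ≤ a s := fun s hs => by
        rcases eq_or_ne s i with rfl | hsi
        · rfl
        · exact (sub_pos.mp (pos_of_mul_pos_left (hir s hsi) hs.le)).le
      refine ⟨fun s hs => hia.trans_le (above s hs), fun r s hr hs => ?_⟩
      have hri : r ≠ i := by rintro rfl; linarith
      exact (sub_neg.mp (neg_of_mul_pos_left (hir r hri) hr.le)).trans_le (above s hs)
  · rintro ⟨hpos, hsep⟩
    by_cases h : ∃ s, 0 < x s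
    · obtain ⟨s₀, hs₀⟩ := h
      obtain ⟨i, hi, himin⟩ := Finset.exists_min_image (Finset.univ.filter (0 < x ·)) a
        ⟨s₀, by simpa using hs₀⟩
      simp only [Finset.mem_filter, Finset.mem_univ, true_and] at hi himin
      refine Or.inr ⟨i, hi, hpos i hi, fun r hri => ?_⟩
      rcases (hx r).lt_or_gt with hr | hr
      · exact mul_pos_of_neg_of_neg (sub_neg.mpr (hsep r i hr hi)) hr
      · exact mul_pos (sub_pos.mpr ((himin r hr).lt_of_ne (hinj.ne hri.symm))) hr
    · push Not at h
      exact Or.inl fun r => (h r).lt_of_ne (hx r)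

theorem ite_sub_sub_ite_eq_ite {P Q R S : Prop} [Decidable P] [Decidable Q] [Decidable R]
    [Decidable S] (h : P ∨ R ↔ S ∨ Q) (hPR : ¬(P ∧ R)) (hSQ : ¬(S ∧ Q)) :
    ((if P then 1 else 0) - ((if Q then 1 else 0) - if R then 1 else 0) : ℤ)
      = if S then 1 else 0 := by
  by_cases P <;> by_cases Q <;> by_cases R <;> by_cases S <;> simp_all

open Classical in
theorem orthant_ray_crossings (hx : ∀ i, x i ≠ 0) (ha : ∀ i, a i ≠ 0)
    (hinj : Function.Injective a) :
    ((if ∀ r, 0 < a r * x r then (1 : ℤ) else 0)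
      - ∑ i, sgn (x i) * if IsFacetCrossing x a i then 1 else 0)
      = if ∀ r, x r < 0 then 1 else 0 := by
  rw [sum_sgn_mul_ite_isFacetCrossing]
  refine ite_sub_sub_ite_eq_ite ((forall_pos_or_exists_entry_iff hx ha hinj).trans
    (forall_neg_or_exists_exit_iff hx hinj).symm) ?_ ?_
  · exact fun ⟨hY, j, hj, hja, _⟩ => (hY j).not_gt (mul_neg_of_pos_of_neg hja hj)
  · exact fun ⟨hX, i, hi, _⟩ => (hX i).not_gt hi

end Crossings

variable {n : ℕ}

theorem cFun_eq_ite {u : Fin n → Fin n → F} {w z : Fin n → F}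
    (hdet : (Matrix.of fun r j => u j r).det ≠ 0) (hz : ∑ j, z j • u j = w) :
    cFun u w = if ∀ i, 0 < z i then sgn (Matrix.of fun r j => u j r).det else 0 := by
  have hinv : (Matrix.of fun r j => u j r)⁻¹ *ᵥ w = z := by
    rw [← hz, ← of_mulVec_eq_sum, Matrix.mulVec_mulVec,
      Matrix.nonsing_inv_mul _ (isUnit_iff_ne_zero.mpr hdet), Matrix.one_mulVec]
  simp only [cFun, hinv]

open Classical in
theorem neg_one_pow_mul_cFun_succAbove_succ {v : Fin (n + 1) → Fin n → F} {w x a : Fin n → F}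
    (hdet : (Matrix.of fun r (j : Fin n) => v j.succ r).det ≠ 0)
    (hx : ∑ j, x j • v j.succ = v 0) (hx0 : ∀ j, x j ≠ 0)
    (hw : ∑ j, (a j * x j) • v j.succ = w) (i : Fin n) :
    (-1 : ℤ) ^ (i.succ : ℕ) * cFun (fun k => v (i.succ.succAbove k)) w
      = -(sgn (Matrix.of fun r (j : Fin n) => v j.succ r).det
          * (sgn (x i) * if IsFacetCrossing x a i then 1 else 0)) := by
  cases n with
  | zero => exact i.elim0
  | succ n =>
    have hdet' := det_succAbove_succ hx i
    have hM : (Matrix.of fun r k => v (i.succ.succAbove k) r).det ≠ 0 := by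
      rw [hdet']
      exact mul_ne_zero (pow_ne_zero _ (by norm_num)) (mul_ne_zero (hx0 i) hdet)
    have hsq : (-1 : ℤ) ^ (i : ℕ) * (-1) ^ (i : ℕ) = 1 := by rw [← mul_pow]; norm_num
    rw [cFun_eq_ite hM ((sum_cons_smul_succAbove_succ hx a i).trans hw), hdet']
    by_cases h : IsFacetCrossing x a i
    · simp only [forall_cons_pos_iff_isFacetCrossing, h, if_true, sgn_mul, sgn_neg_one_pow,
        Fin.val_succ, pow_succ]
      linear_combination (-(sgn (x i) * sgn (Matrix.of fun r j => v j.succ r).det)) * hsq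
    · simp [forall_cons_pos_iff_isFacetCrossing, h]

theorem dFun_eq_ite {v : Fin (n + 1) → Fin n → F} {x : Fin n → F}
    (hli : LinearIndependent F fun j : Fin n => v j.succ) (hx : ∑ j, x j • v j.succ = v 0) :
    dFun v = if ∀ j, x j < 0 then sgn (Matrix.of fun r (j : Fin n) => v j.succ r).det else 0 := by
  have hrel : (∃ lam : Fin (n + 1) → F, (∀ i, lam i ≠ 0) ∧ (∑ i, lam i • v i) = 0 ∧
      ((∀ i, 0 < lam i) ∨ (∀ i, lam i < 0))) ↔ ∀ j, x j < 0 := by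
    constructor
    · rintro ⟨lam, -, hsum, hsign⟩ j
      rw [Fin.sum_univ_succ, ← hx, Finset.smul_sum, ← Finset.sum_add_distrib] at hsum
      simp only [smul_smul, ← add_smul] at hsum
      have hj := Fintype.linearIndependent_iff.mp hli _ hsum j
      rcases hsign with h | h <;> nlinarith [h 0, h j.succ]
    · intro hneg
      refine ⟨Fin.cons 1 (-x), Fin.cases one_ne_zero fun j => neg_ne_zero.mpr (hneg j).ne, ?_,
        Or.inl (Fin.cases one_pos fun j => neg_pos.mpr (hneg j))⟩
      simp [Fin.sum_univ_succ, hx]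
  by_cases h : ∀ j, x j < 0 <;> simp [dFun, hrel, h]

end Ordered

/-- The cocycle relation between `c` and `d`: for `v_0, ..., v_n, w` in general position,
`∑_i (-1)^i c(v_0,...,v̂_i,...,v_n)(w) = d(v_0,...,v_n)`. -/
theorem stmt8 {F : Type*} [Field F] [LinearOrder F] [IsStrictOrderedRing F] {n : ℕ}
    (v : Fin (n + 1) → (Fin n → F)) (w : Fin n → F)
    (hgp : GenPos (Fin.snoc v w : Fin (n + 2) → Fin n → F)) :
    (∑ i : Fin (n + 1), (-1 : ℤ) ^ (i : ℕ) * cFun (fun k => v (i.succAbove k)) w)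
      = dFun v := by
  have hli := hgp.linearIndependent_succ
  obtain ⟨x, hx⟩ := hli.exists_sum_smul_eq (v 0)
  obtain ⟨y, hy⟩ := hli.exists_sum_smul_eq w
  have hx0 := hgp.coord_head_ne_zero hx
  set a := fun j => y j / x j
  have ha0 : ∀ j, a j ≠ 0 := fun j => div_ne_zero (hgp.coord_last_ne_zero hy j) (hx0 j)
  have hw : ∑ j, (a j * x j) • v j.succ = w := by simpa [a, div_mul_cancel₀ _ (hx0 _)] using hy
  set D := (Matrix.of fun r (j : Fin n) => v j.succ r).det
  have hD : D ≠ 0 := ((Matrix.isUnit_iff_isUnit_det _).mp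
    (Matrix.linearIndependent_cols_iff_isUnit.mp hli)).ne_zero
  rw [Fin.sum_univ_succ, Finset.sum_congr rfl fun i _ =>
    neg_one_pow_mul_cFun_succAbove_succ hD hx hx0 hw i, dFun_eq_ite hli hx]
  simp only [Fin.val_zero, pow_zero, one_mul, Fin.succAbove_zero]
  rw [cFun_eq_ite hD hw]
  convert congrArg (sgn D * ·) (orthant_ray_crossings hx0 ha0 (hgp.injective_div hx hy)) using 1
  · rw [Finset.sum_neg_distrib, ← Finset.mul_sum]
    split_ifs <;> ring
  · split_ifs <;> ring
end

section
/- For n = 2 and α = [[a,b],[0,c]] with a > 0 and c > 0, the Shintani cocycle value σ(1,α) is identically zero on R^2 \ {0}. -/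
open Matrix
open scoped BigOperators

noncomputable section

/-- The iterated Laurent series field `ℝ((ε_1))...((ε_n))`, together with its field
structure (built by recursion). -/
def IterData : ℕ → Σ' (T : Type), Field T
  | 0 => ⟨ℝ, inferInstance⟩
  | (n + 1) =>
    let p := IterData n
    letI : Field p.1 := p.2
    ⟨LaurentSeries p.1, inferInstance⟩

/-- The iterated Laurent series field `F = ℝ((ε_1))...((ε_n))`. -/
def IterLaurent (n : ℕ) : Type := (IterData n).1

instance (n : ℕ) : Field (IterLaurent n) := (IterData n).2

/-- `IterLaurent 0` is definitionally `ℝ`. -/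
def toR (x : IterLaurent 0) : ℝ := x

/-- `IterLaurent (n+1)` is definitionally the Laurent series field over `IterLaurent n`. -/
def toLS {n : ℕ} (x : IterLaurent (n + 1)) : LaurentSeries (IterLaurent n) := x

/-- An element of `ℝ((ε_1))...((ε_n))` is *positive* if it is nonzero and the leading
coefficient (the coefficient of the smallest exponent, exponents being ordered
lexicographically with `ε_{i+1}` infinitesimal with respect to `ε_i`) is positive. -/
def IterPos : ∀ n : ℕ, IterLaurent n → Prop
  | 0, x => 0 < toR x
  | (n + 1), x => toLS x ≠ 0 ∧ IterPos n ((toLS x).coeff (toLS x).order)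

/-- The order relation on `ℝ((ε_1))...((ε_n))`: `x < y` iff `y - x` is positive. -/
def llt (n : ℕ) (x y : IterLaurent n) : Prop := IterPos n (y - x)

/-- The embedding of `ℝ` into `ℝ((ε_1))...((ε_n))` as constant series. -/
def realEmb : ∀ n : ℕ, ℝ → IterLaurent n
  | 0, r => r
  | (n + 1), r => (HahnSeries.C (realEmb n r) : LaurentSeries (IterLaurent n))

/-- The variable `ε_{i+1}` as an element of `ℝ((ε_1))...((ε_n))` (for `i : Fin n`). -/
def epsV : ∀ n : ℕ, Fin n → IterLaurent n
  | (n + 1), i =>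
    if h : (i : ℕ) < n then
      (HahnSeries.C (epsV n ⟨i, h⟩) : LaurentSeries (IterLaurent n))
    else (HahnSeries.single (1 : ℤ) 1 : LaurentSeries (IterLaurent n))

open Classical in
/-- The sign of an element of `ℝ((ε_1))...((ε_n))` with respect to the
leading-coefficient positivity. -/
def sgnIter (n : ℕ) (x : IterLaurent n) : ℤ :=
  if IterPos n x then 1 else if IterPos n (-x) then -1 else 0

open Classical in
/-- The signed open-cone characteristic function over `ℝ((ε_1))...((ε_m))`:
`c(v_1,...,v_n)(w) = sgn det(v_1,...,v_n)` if all the dual-basis coordinates of `w`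
with respect to the basis `v_1, ..., v_n` are positive, and `0` otherwise. -/
def cIter (m n : ℕ) (v : Fin n → (Fin n → IterLaurent m)) (w : Fin n → IterLaurent m) : ℤ :=
  let M : Matrix (Fin n) (Fin n) (IterLaurent m) := Matrix.of fun r j => v j r
  if ∀ i, IterPos m ((M⁻¹ *ᵥ w) i) then sgnIter m M.det else 0

/-- The Shintani cocycle `σ(α_1,...,α_n)(w) = c(α_1 b(ε_1), ..., α_n b(ε_n))(w)`,
where `b(ε) = (1, ε, ..., ε^{n-1})ᵀ` and `w ∈ ℝ^n` is embedded into
`F^n = (ℝ((ε_1))...((ε_n)))^n` as a constant vector. -/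
def sigmaC (n : ℕ) (α : Fin n → Matrix (Fin n) (Fin n) ℝ) (w : Fin n → ℝ) : ℤ :=
  cIter n n
    (fun (i : Fin n) (r : Fin n) => ∑ j : Fin n, realEmb n (α i r j) * (epsV n i) ^ (j : ℕ))
    (fun r : Fin n => realEmb n (w r))

/-!
Over `F = ℝ((ε₁))((ε₂))` the matrix `M` with columns `(1, ε₁)ᵀ` and `(a + bε₂, cε₂)ᵀ` has
`det M = cε₂ - (a + bε₂)ε₁`, whose leading term is `-aε₁`, so `det M < 0`. By Cramer's rule the
coordinates of `w = (x, y)` are `adj(M) w / det M`, where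
`adj(M) w = (-ay + (cx - by)ε₂, y - xε₁)`. For `(x, y) ≠ 0` one of these two entries is positive
(according to the sign of `y`, and of `x` when `y = 0`), so the corresponding coordinate of `w` is
negative and `w` lies outside the open cone.
-/

section

open HahnSeries

theorem iterPos_succ_iff {n : ℕ} (x : IterLaurent (n + 1)) :
    IterPos (n + 1) x ↔ toLS x ≠ 0 ∧ IterPos n (toLS x).leadingCoeff := by
  rw [leadingCoeff_eq]; exact Iff.rfl

theorem IterPos.ne_zero : ∀ {n : ℕ} {x : IterLaurent n}, IterPos n x → x ≠ 0
  | 0, _, hx, h => lt_irrefl _ (h ▸ hx)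
  | _ + 1, _, hx, h => hx.1 (congrArg toLS h)

theorem IterPos.mul : ∀ {n : ℕ} {x y : IterLaurent n},
    IterPos n x → IterPos n y → IterPos n (x * y)
  | 0, _, _, hx, hy => mul_pos hx hy
  | n + 1, x, y, hx, hy => by
    rw [iterPos_succ_iff] at hx hy ⊢
    have hxy : toLS x * toLS y ≠ 0 := mul_ne_zero hx.1 hy.1
    exact ⟨hxy, (leadingCoeff_mul (toLS x) (toLS y)).symm ▸ hx.2.mul hy.2⟩

theorem IterPos.not_neg : ∀ {n : ℕ} {x : IterLaurent n}, IterPos n x → ¬IterPos n (-x)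
  | 0, _, hx, hnx => (add_pos hx hnx).ne' (add_neg_cancel _)
  | _ + 1, x, hx, hnx => by
    rw [iterPos_succ_iff] at hx hnx
    exact hx.2.not_neg (leadingCoeff_neg (x := toLS x) ▸ hnx.2)

namespace IterLaurent

variable {n : ℕ}

def C : IterLaurent n →+* IterLaurent (n + 1) := HahnSeries.C

/-- The outermost infinitesimal `ε_{n+1}` of `IterLaurent (n + 1)`. -/
def X : IterLaurent (n + 1) := (single (1 : ℤ) 1 : LaurentSeries (IterLaurent n))

theorem toLS_add (x y : IterLaurent (n + 1)) : toLS (x + y) = toLS x + toLS y := rfl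

theorem toLS_mul (x y : IterLaurent (n + 1)) : toLS (x * y) = toLS x * toLS y := rfl

theorem toLS_C (s : IterLaurent n) : toLS (C s) = HahnSeries.single 0 s := HahnSeries.C_apply s

theorem toLS_X : toLS (X : IterLaurent (n + 1)) = HahnSeries.single 1 1 := rfl

theorem toLS_C_mul_X (t : IterLaurent n) : toLS (C t * X) = HahnSeries.single 1 t := by
  rw [toLS_mul, toLS_C, toLS_X, single_mul_single, zero_add, mul_one]

theorem iterPos_of_toLS_eq_single {x : IterLaurent (n + 1)} {k : ℤ} {s : IterLaurent n}
    (hx : toLS x = HahnSeries.single k s) (hs : IterPos n s) : IterPos (n + 1) x := by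
  rw [iterPos_succ_iff, hx, leadingCoeff_of_single]
  exact ⟨HahnSeries.single_ne_zero hs.ne_zero, hs⟩

theorem iterPos_C {s : IterLaurent n} (hs : IterPos n s) : IterPos (n + 1) (C s) :=
  iterPos_of_toLS_eq_single (toLS_C s) hs

theorem iterPos_C_mul_X {t : IterLaurent n} (ht : IterPos n t) : IterPos (n + 1) (C t * X) :=
  iterPos_of_toLS_eq_single (toLS_C_mul_X t) ht

theorem iterPos_C_add_C_mul_X {s : IterLaurent n} (hs : IterPos n s) (t : IterLaurent n) :
    IterPos (n + 1) (C s + C t * X) := by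
  have hlt : (HahnSeries.single 0 s : LaurentSeries (IterLaurent n)).orderTop <
      (HahnSeries.single 1 t).orderTop := by
    rw [orderTop_single hs.ne_zero]
    rcases eq_or_ne t 0 with rfl | ht
    · simp
    · rw [orderTop_single ht]; exact_mod_cast zero_lt_one
  have hlc := leadingCoeff_add_eq_left hlt
  rw [leadingCoeff_of_single] at hlc
  rw [iterPos_succ_iff, toLS_add, toLS_C, toLS_C_mul_X, hlc]
  refine ⟨fun h => hs.ne_zero ?_, hs⟩
  rw [← hlc, h, leadingCoeff_zero]

end IterLaurent

end

theorem cIter_eq_zero_of_iterPos_adjugate_mulVec {m n : ℕ} (v : Fin n → Fin n → IterLaurent m)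
    (w : Fin n → IterLaurent m) (hdet : IterPos m (-(of fun r j => v j r).det)) (i : Fin n)
    (hi : IterPos m (((of fun r j => v j r).adjugate *ᵥ w) i)) :
    cIter m n v w = 0 := by
  set M : Matrix (Fin n) (Fin n) (IterLaurent m) := of fun r j => v j r
  have hdet0 : M.det ≠ 0 := fun h => hdet.ne_zero (by rw [h, neg_zero])
  have hcoord : -M.det * (M⁻¹ *ᵥ w) i = -(M.adjugate *ᵥ w) i := by
    rw [inv_def, Ring.inverse_eq_inv', smul_mulVec, Pi.smul_apply, smul_eq_mul]
    field_simp
  rw [cIter, if_neg]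
  intro hpos
  exact hi.not_neg (hcoord ▸ hdet.mul (hpos i))

def realEmbHom : (n : ℕ) → ℝ →+* IterLaurent n
  | 0 => RingHom.id ℝ
  | n + 1 => IterLaurent.C.comp (realEmbHom n)

theorem realEmbHom_apply : ∀ (n : ℕ) (r : ℝ), realEmbHom n r = realEmb n r
  | 0, _ => rfl
  | n + 1, r => congrArg IterLaurent.C (realEmbHom_apply n r)

theorem realEmbHom_succ_apply (n : ℕ) (r : ℝ) :
    realEmbHom (n + 1) r = IterLaurent.C (realEmbHom n r) := rfl

theorem realEmb_zero (n : ℕ) : realEmb n 0 = 0 := by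
  rw [← realEmbHom_apply, map_zero]

theorem iterPos_realEmb : ∀ {n : ℕ} {r : ℝ}, 0 < r → IterPos n (realEmb n r)
  | 0, _, hr => hr
  | _ + 1, _, hr => IterLaurent.iterPos_C (iterPos_realEmb hr)

section ShintaniTwo

open IterLaurent

def shintaniCols (a b c : ℝ) : Fin 2 → Fin 2 → IterLaurent 2 :=
  ![![1, epsV 2 0], ![realEmb 2 a + realEmb 2 b * epsV 2 1, realEmb 2 c * epsV 2 1]]

theorem epsV_two_zero : epsV 2 0 = C X := rfl

theorem epsV_two_one : epsV 2 1 = X := rfl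

theorem neg_det_shintaniCols (a b c : ℝ) : -(of fun r j => shintaniCols a b c j r).det =
    C (realEmb 1 a * X) + C (realEmb 1 b * X - realEmb 1 c) * X := by
  simp only [det_fin_two, of_apply, shintaniCols, epsV_two_zero, epsV_two_one,
    ← realEmbHom_apply, realEmbHom_succ_apply, cons_val', cons_val_zero, cons_val_one,
    cons_val_fin_one, map_mul, map_sub]
  ring

theorem iterPos_neg_det_shintaniCols {a : ℝ} (ha : 0 < a) (b c : ℝ) :
    IterPos 2 (-(of fun r j => shintaniCols a b c j r).det) := by
  rw [neg_det_shintaniCols]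
  exact iterPos_C_add_C_mul_X (iterPos_C_mul_X (iterPos_realEmb ha)) _

theorem adjugate_mulVec_shintaniCols (a b c x y : ℝ) :
    (of fun r j => shintaniCols a b c j r).adjugate *ᵥ ![realEmb 2 x, realEmb 2 y] =
      ![C (realEmb 1 (-(a * y))) + C (realEmb 1 (c * x - b * y)) * X,
        C (realEmb 1 y + C (realEmb 0 (-x)) * X)] := by
  ext i
  fin_cases i <;>
  simp only [adjugate_fin_two, of_apply, mulVec, dotProduct, Fin.sum_univ_two, shintaniCols,
    epsV_two_zero, epsV_two_one, ← realEmbHom_apply, realEmbHom_succ_apply, cons_val',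
    cons_val_zero, cons_val_one, cons_val_fin_one, Fin.zero_eta, Fin.mk_one, map_neg, map_mul,
    map_sub, map_add] <;>
  ring

theorem exists_iterPos_adjugate_mulVec_shintaniCols {a c : ℝ} (ha : 0 < a) (hc : 0 < c) (b : ℝ)
    {x y : ℝ} (hw : ¬(x = 0 ∧ y = 0)) :
    ∃ i, IterPos 2 (((of fun r j => shintaniCols a b c j r).adjugate *ᵥ
      ![realEmb 2 x, realEmb 2 y]) i) := by
  rw [adjugate_mulVec_shintaniCols]
  rcases lt_trichotomy y 0 with hy | rfl | hy
  · exact ⟨0, iterPos_C_add_C_mul_X (iterPos_realEmb (by nlinarith)) _⟩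
  · have hx : x ≠ 0 := fun hx => hw ⟨hx, rfl⟩
    simp only [mul_zero, neg_zero, sub_zero, realEmb_zero, map_zero, zero_add]
    rcases hx.lt_or_gt with hx | hx
    · exact ⟨1, iterPos_C (iterPos_C_mul_X (iterPos_realEmb (neg_pos.2 hx)))⟩
    · exact ⟨0, iterPos_C_mul_X (iterPos_realEmb (mul_pos hc hx))⟩
  · exact ⟨1, iterPos_C (iterPos_C_add_C_mul_X (iterPos_realEmb hy) _)⟩

end ShintaniTwo

/-- The `n = 2` computation of the Shintani cocycle for an upper-triangular matrix
`α = [[a,b],[0,c]]` with `a > 0` and `c > 0`: `σ(1,α)` vanishes identically on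
`ℝ² \ {0}`.  Here `σ(1,α)(w) = c(M)(w)` where `M` has columns `(1, ε_1)ᵀ` and
`α(1, ε_2)ᵀ = (a + bε_2, cε_2)ᵀ` over `F = ℝ((ε_1))((ε_2))`. -/
theorem stmt18 (a b c : ℝ) (ha : 0 < a) (hc : 0 < c)
    (x y : ℝ) (hw : ¬(x = 0 ∧ y = 0)) :
    cIter 2 2
      ![![(1 : IterLaurent 2), epsV 2 0],
        ![realEmb 2 a + realEmb 2 b * epsV 2 1, realEmb 2 c * epsV 2 1]]
      ![realEmb 2 x, realEmb 2 y] = 0 := by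
  obtain ⟨i, hi⟩ := exists_iterPos_adjugate_mulVec_shintaniCols ha hc b hw
  exact cIter_eq_zero_of_iterPos_adjugate_mulVec (shintaniCols a b c) _
    (iterPos_neg_det_shintaniCols ha b c) i hi
end
end
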